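/- Suppose σ is strongly erasing and verifies the optimality condition. Then for every finite binary word w and every (finite or infinite) binary word u, there exist a positive integer h depending only on w, and a binary word v, such that σ^h(wv) has u as a prefix (and equals u if u is infinite). -/

import Mathlib

/-- Apply a `k`-block substitution blockwise to a finite word, dropping the
trailing partial block (the paper's truncation convention). -/
def blockApply (k : Nat) (sigma : List Bool -> List Bool) (w : List Bool) : List Bool :=
  if h : 0 < k && k <= w.length then
    sigma (w.take k) ++ blockApply k sigma (w.drop k)
  else []
termination_by w.length
decreasing_by
  simp only [Bool.and_eq_true, decide_eq_true_eq] at h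
  simp [List.length_drop]
  omega

/-- The length-`m` prefix of an infinite binary word. -/
def prefixOf (u : Nat -> Bool) (m : Nat) : List Bool := List.ofFn fun i : Fin m => u i

/-- Concatenation of the first `m` words of a sequence of finite words. -/
def concatPre (v : Nat -> List Bool) (m : Nat) : List Bool :=
  (List.ofFn fun i : Fin m => v i).flatten

/-- The optimality condition: every infinite binary word is an infinite
concatenation of nonempty images of length-`k` blocks under `sigma`. -/
def OC (k : Nat) (sigma : List Bool -> List Bool) : Prop :=
  ∀ w : Nat -> Bool, ∃ u : Nat -> List Bool,
    (∀ i, (u i).length = k ∧ sigma (u i) ≠ []) ∧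
    ∀ m, concatPre (fun i => sigma (u i)) m
        = prefixOf w (concatPre (fun i => sigma (u i)) m).length

/-- The set of `k`-roundings of a finite word `w`: extensions of `w` of length
the least multiple of `k` that is `≥ |w|`. -/
def kRound (k : Nat) (w : List Bool) : Set (List Bool) :=
  {u | ∃ v : List Bool, u = w ++ v ∧ u.length = k * ((w.length + k - 1) / k)}

/-- `wIter k sigma n w` is the set `w^[n]` of the paper: `w^[0] = {w}` and
`w^[n] = {sigma(r) : r a k-rounding of an element of w^[n-1]}`. -/
def wIter (k : Nat) (sigma : List Bool -> List Bool) : Nat -> List Bool -> Set (List Bool)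
  | 0, w => {w}
  | n + 1, w => {u | ∃ p ∈ wIter k sigma n w, ∃ r ∈ kRound k p, u = blockApply k sigma r}


/-!
Fix `n` with `[] ∈ w^[n]`; it can be taken positive since `[]` stays in every later `w^[n']`.
By induction on `n`, every `x ∈ w^[n]` is reachable: for any infinite word `u`, suitable
extensions of `w` are sent by `σ^n` to `x` followed by arbitrarily long prefixes of `u`.
In the inductive step, `x = σ(p ++ e)` with `p ∈ w^[n-1]` and `p ++ e` a `k`-rounding; the
optimality condition writes `u` as a concatenation `σ(b₀) σ(b₁) ⋯` of images of blocks, so it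
suffices to reach `p` followed by prefixes of `e b₀ b₁ ⋯`, which the induction hypothesis gives.
Taking `x = []` yields the theorem.
-/

section BlockApply

variable {k : ℕ} {σ : List Bool → List Bool}

theorem blockApply_of_length_lt {w : List Bool} (h : w.length < k) : blockApply k σ w = [] := by
  rw [blockApply, dif_neg]
  simp only [Bool.and_eq_true, decide_eq_true_eq]
  omega

theorem blockApply_nil : blockApply k σ [] = [] := by
  rw [blockApply, dif_neg]
  simp only [List.length_nil, Bool.and_eq_true, decide_eq_true_eq]
  omega

theorem blockApply_append_of_length_eq (hk : 0 < k) {b : List Bool} (hb : b.length = k)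
    (w : List Bool) : blockApply k σ (b ++ w) = σ b ++ blockApply k σ w := by
  rw [blockApply, dif_pos (by simp [hk, hb]), List.take_left' hb, List.drop_left' hb]

theorem blockApply_of_length_eq (hk : 0 < k) {b : List Bool} (hb : b.length = k) :
    blockApply k σ b = σ b := by
  simpa [blockApply_nil] using blockApply_append_of_length_eq (σ := σ) hk hb []

theorem blockApply_append (hk : 0 < k) {a : List Bool} (ha : k ∣ a.length) (b : List Bool) :
    blockApply k σ (a ++ b) = blockApply k σ a ++ blockApply k σ b := by
  obtain ⟨q, hq⟩ := ha
  induction q generalizing a with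
  | zero => simp [List.length_eq_zero_iff.mp hq, blockApply_nil]
  | succ q ih =>
    rw [Nat.mul_succ] at hq
    have htake : (a.take k).length = k := by simp; omega
    have hdrop : (a.drop k).length = k * q := by simp; omega
    rw [← List.take_append_drop k a, List.append_assoc,
      blockApply_append_of_length_eq hk htake, blockApply_append_of_length_eq hk htake,
      ih hdrop, List.append_assoc]

end BlockApply

theorem prefixOf_length (u : ℕ → Bool) (m : ℕ) : (prefixOf u m).length = m := by
  simp [prefixOf]

theorem prefixOf_add (u : ℕ → Bool) (a b : ℕ) :
    prefixOf u (a + b) = prefixOf u a ++ List.ofFn fun i : Fin b => u (a + i) := by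
  simp [prefixOf, List.ofFn_add]

theorem prefixOf_isPrefix_of_le (u : ℕ → Bool) {a b : ℕ} (h : a ≤ b) :
    prefixOf u a <+: prefixOf u b := by
  obtain ⟨c, rfl⟩ := Nat.exists_eq_add_of_le h
  rw [prefixOf_add]
  exact List.prefix_append _ _

theorem prefixOf_getD_length (u : List Bool) : prefixOf (fun j => u.getD j false) u.length = u :=
  List.ext_getElem (prefixOf_length _ _) fun _ _ _ => by simp [prefixOf]

theorem concatPre_succ (v : ℕ → List Bool) (m : ℕ) :
    concatPre v (m + 1) = concatPre v m ++ v m := by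
  rw [concatPre, concatPre, List.ofFn_succ', List.concat_eq_append]
  simp [Fin.last]

theorem length_concatPre {k : ℕ} {v : ℕ → List Bool} (hv : ∀ i, (v i).length = k) (m : ℕ) :
    (concatPre v m).length = k * m := by
  induction m with
  | zero => simp [concatPre]
  | succ m ih => simp [concatPre_succ, ih, hv, Nat.mul_succ]

theorem le_length_concatPre {v : ℕ → List Bool} (hv : ∀ i, v i ≠ []) (m : ℕ) :
    m ≤ (concatPre v m).length := by
  induction m with
  | zero => simp
  | succ m ih =>
    have := List.length_pos_iff.mpr (hv m)
    simp only [concatPre_succ, List.length_append]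
    omega

theorem blockApply_concatPre {k : ℕ} (σ : List Bool → List Bool) (hk : 0 < k)
    {v : ℕ → List Bool} (hv : ∀ i, (v i).length = k) (m : ℕ) :
    blockApply k σ (concatPre v m) = concatPre (fun i => σ (v i)) m := by
  induction m with
  | zero => simp [concatPre, blockApply_nil]
  | succ m ih =>
    rw [concatPre_succ, blockApply_append hk ⟨m, length_concatPre hv m⟩, ih, concatPre_succ,
      blockApply_of_length_eq hk (hv m)]

/-- `b 0 ++ b 1 ++ ⋯` as an infinite word, for blocks `b i` of length `k`. -/
def joinBlocks (k : ℕ) (b : ℕ → List Bool) : ℕ → Bool :=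
  fun j => (b (j / k)).getD (j % k) false

theorem prefixOf_joinBlocks {k : ℕ} (hk : 0 < k) {b : ℕ → List Bool}
    (hb : ∀ i, (b i).length = k) (s : ℕ) :
    prefixOf (joinBlocks k b) (k * s) = concatPre b s := by
  induction s with
  | zero => simp [prefixOf, concatPre]
  | succ s ih =>
    rw [Nat.mul_succ, prefixOf_add, ih, concatPre_succ]
    congr 1
    refine List.ext_getElem (by simp [hb]) fun i hi hi' => ?_
    have hik : i < k := by simpa using hi
    simp [joinBlocks, Nat.mul_add_div hk, Nat.div_eq_of_lt hik,
      Nat.mod_eq_of_lt hik, List.getElem?_eq_getElem hi']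

theorem blockApply_prefixOf_joinBlocks {k : ℕ} (σ : List Bool → List Bool) (hk : 0 < k)
    {b : ℕ → List Bool} (hb : ∀ i, (b i).length = k) (t : ℕ) :
    blockApply k σ (prefixOf (joinBlocks k b) t) = concatPre (fun i => σ (b i)) (t / k) := by
  conv_lhs => rw [← Nat.div_add_mod t k, prefixOf_add]
  rw [blockApply_append hk ⟨t / k, prefixOf_length _ _⟩, prefixOf_joinBlocks hk hb,
    blockApply_concatPre σ hk hb, blockApply_of_length_lt (by simpa using Nat.mod_lt t hk),
    List.append_nil]

def appendSeq (e : List Bool) (V : ℕ → Bool) : ℕ → Bool :=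
  fun j => if h : j < e.length then e[j] else V (j - e.length)

theorem prefixOf_appendSeq (e : List Bool) (V : ℕ → Bool) (t : ℕ) :
    prefixOf (appendSeq e V) (e.length + t) = e ++ prefixOf V t :=
  List.ext_getElem (by simp [prefixOf]) fun i _ _ => by
    simp only [prefixOf, List.getElem_ofFn, List.getElem_append, appendSeq]

def ReachesAfter (f : List Bool → List Bool) (w x : List Bool) : Prop :=
  ∀ u : ℕ → Bool, ∃ V : ℕ → Bool, ∀ m, ∃ t L, m ≤ L ∧ f (w ++ prefixOf V t) = x ++ prefixOf u L

theorem reachesAfter_id (w : List Bool) : ReachesAfter id w w :=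
  fun u => ⟨u, fun m => ⟨m, m, le_rfl, rfl⟩⟩

theorem ReachesAfter.blockApply_comp {k : ℕ} {σ : List Bool → List Bool} (hk : 0 < k)
    (hOC : OC k σ) {f : List Bool → List Bool} {w p : List Bool} (h : ReachesAfter f w p)
    {e : List Bool} (he : k ∣ (p ++ e).length) :
    ReachesAfter (blockApply k σ ∘ f) w (blockApply k σ (p ++ e)) := by
  intro u
  obtain ⟨b, hb, hbu⟩ := hOC u
  obtain ⟨V, hV⟩ := h (appendSeq e (joinBlocks k b))
  refine ⟨V, fun m => ?_⟩
  obtain ⟨t, L, hL, hf⟩ := hV (e.length + k * m)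
  obtain ⟨s, rfl⟩ := Nat.exists_eq_add_of_le (le_of_add_le_left hL)
  have hms : m ≤ s / k := (Nat.le_div_iff_mul_le hk).mpr (by rw [Nat.mul_comm]; omega)
  refine ⟨t, _, hms.trans (le_length_concatPre (fun i => (hb i).2) _), ?_⟩
  rw [Function.comp_apply, hf, prefixOf_appendSeq, ← List.append_assoc,
    blockApply_append hk he, blockApply_prefixOf_joinBlocks σ hk (fun i => (hb i).1), ← hbu]

theorem reachesAfter_iterate_of_mem_wIter {k : ℕ} {σ : List Bool → List Bool} (hk : 0 < k)
    (hOC : OC k σ) {n : ℕ} {w x : List Bool} (hx : x ∈ wIter k σ n w) :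
    ReachesAfter (blockApply k σ)^[n] w x := by
  induction n generalizing x with
  | zero =>
    rw [wIter, Set.mem_singleton_iff] at hx
    exact hx ▸ reachesAfter_id w
  | succ n ih =>
    obtain ⟨p, hp, _, ⟨e, rfl, hlen⟩, rfl⟩ := hx
    rw [Function.iterate_succ']
    exact (ih hp).blockApply_comp hk hOC ⟨_, hlen⟩

theorem nil_mem_wIter_succ {k : ℕ} {σ : List Bool → List Bool} (hk : 0 < k) {n : ℕ}
    {w : List Bool} (h : [] ∈ wIter k σ n w) : [] ∈ wIter k σ (n + 1) w :=
  ⟨[], h, [], ⟨[], rfl, by simp [Nat.div_eq_of_lt (by omega : k - 1 < k)]⟩, blockApply_nil.symm⟩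

theorem strongly_erasing_reach_any_prefix_general
    (k : Nat) (sigma : List Bool -> List Bool)
    (hk : 2 ≤ k)
    (hSE : ∀ w : List Bool, ∃ n : Nat, [] ∈ wIter k sigma n w)
    (hOC : OC k sigma) :
    ∀ w : List Bool, ∃ h : Nat, 0 < h ∧
      (∀ u : List Bool, ∃ v : List Bool, u <+: (blockApply k sigma)^[h] (w ++ v)) ∧
      (∀ u : Nat -> Bool, ∃ v : Nat -> Bool, ∀ m : Nat, ∃ l : Nat,
        m ≤ ((blockApply k sigma)^[h] (w ++ prefixOf v l)).length ∧
        (blockApply k sigma)^[h] (w ++ prefixOf v l)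
          = prefixOf u ((blockApply k sigma)^[h] (w ++ prefixOf v l)).length) := by
  intro w
  have hk0 : 0 < k := by omega
  obtain ⟨n, hn⟩ := hSE w
  have hreach := reachesAfter_iterate_of_mem_wIter hk0 hOC (nil_mem_wIter_succ hk0 hn)
  refine ⟨n + 1, n.succ_pos, fun u => ?_, fun u => ?_⟩
  · obtain ⟨V, hV⟩ := hreach fun j => u.getD j false
    obtain ⟨t, L, hL, heq⟩ := hV u.length
    refine ⟨prefixOf V t, ?_⟩
    rw [heq, List.nil_append]
    have := prefixOf_isPrefix_of_le (fun j => u.getD j false) hL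
    rwa [prefixOf_getD_length] at this
  · obtain ⟨V, hV⟩ := hreach u
    refine ⟨V, fun m => ?_⟩
    obtain ⟨t, L, hL, heq⟩ := hV m
    rw [List.nil_append] at heq
    exact ⟨t, by rwa [heq, prefixOf_length], by rw [heq, prefixOf_length]⟩

/-- if `sigma` is strongly erasing and satisfies the optimality
condition then for every finite word `w` there is `h > 0` (depending only on
`w`) such that: every finite word `u` is a prefix of `sigma^h(wv)` for some
finite extension `v`, and every infinite word `u` equals `sigma^h(wv)` for some
infinite extension `v` (in the sense that the iterated images of the finite
prefixes of `wv` are exactly the prefixes of `u`, of unbounded length). -/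
theorem strongly_erasing_reach_any_prefix
    (k : Nat) (sigma : List Bool -> List Bool) (weps : List Bool)
    (hk : 2 ≤ k) (hlen : weps.length = k)
    (hne1 : weps ≠ List.replicate k true)
    (herase : ∀ w : List Bool, w.length = k → (sigma w = [] ↔ w = weps))
    (hSE : ∀ w : List Bool, ∃ n : Nat, [] ∈ wIter k sigma n w)
    (hOC : OC k sigma) :
    ∀ w : List Bool, ∃ h : Nat, 0 < h ∧
      (∀ u : List Bool, ∃ v : List Bool, u <+: (blockApply k sigma)^[h] (w ++ v)) ∧
      (∀ u : Nat -> Bool, ∃ v : Nat -> Bool, ∀ m : Nat, ∃ l : Nat,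
        m ≤ ((blockApply k sigma)^[h] (w ++ prefixOf v l)).length ∧
        (blockApply k sigma)^[h] (w ++ prefixOf v l)
          = prefixOf u ((blockApply k sigma)^[h] (w ++ prefixOf v l)).length) :=
  strongly_erasing_reach_any_prefix_general k sigma hk hSE hOC
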